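/- In a DR-semigroup S, the projections D(S) commute with one another if and only if every projection is bideterministic (D(S) ⊆ B(S)). -/
import Mathlib


class DRSemigroup (S : Type*) extends Semigroup S where
  D : S → S
  R : S → S
  dr1 : ∀ x : S, D x * x = x
  dr2 : ∀ x : S, x * R x = x
  dr3a : ∀ x : S, R (D x) = D x
  dr3b : ∀ x : S, D (R x) = R x
  dr4a : ∀ x y : S, D x * D (x * y) = D (x * y)
  dr4b : ∀ x y : S, D (x * y) * D x = D (x * y)
  dr5a : ∀ x y : S, R y * R (x * y) = R (x * y)
  dr5b : ∀ x y : S, R (x * y) * R y = R (x * y)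

namespace DRSemigroup

variable {S : Type*} [DRSemigroup S]

/-- `e` is a projection: an element of `D(S)`. -/
def IsProj (e : S) : Prop := ∃ t : S, D t = e

/-- The natural order on projections: `e ≤ f` iff `e = ef = fe`. -/
def ple (e f : S) : Prop := e = e * f ∧ e = f * e

/-- The ample conditions. -/
def Ample (S : Type*) [DRSemigroup S] : Prop :=
  (∀ (x e : S), IsProj e → x * e = D (x * e) * x) ∧
  (∀ (x e : S), IsProj e → e * x = x * R (e * x))

/-- The order `≤_r`. -/
def leR (s t : S) : Prop := ple (D s) (D t) ∧ s = D s * t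

/-- The order `≤_l`. -/
def leL (s t : S) : Prop := ple (R s) (R t) ∧ s = t * R s

/-- Bideterministic elements. -/
def Bidet (s : S) : Prop :=
  ∀ e : S, IsProj e → s * e = D (s * e) * s ∧ e * s = s * R (e * s)

end DRSemigroup

open DRSemigroup

lemma proj_D {S : Type*} [DRSemigroup S] {e : S} (he : IsProj e) :
    DRSemigroup.D e = e := by
  obtain ⟨t, rfl⟩ := he
  rw [← DRSemigroup.dr3a t, DRSemigroup.dr3b, DRSemigroup.dr3a]

lemma proj_R {S : Type*} [DRSemigroup S] {e : S} (he : IsProj e) :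
    DRSemigroup.R e = e := by
  obtain ⟨t, rfl⟩ := he
  exact DRSemigroup.dr3a t

lemma proj_idem {S : Type*} [DRSemigroup S] {e : S} (he : IsProj e) :
    e * e = e := by
  obtain ⟨t, rfl⟩ := he
  have h := DRSemigroup.dr4b t (DRSemigroup.R t)
  rwa [DRSemigroup.dr2] at h

theorem stmt_11 {S : Type*} [DRSemigroup S] :
    (∀ e f : S, IsProj e → IsProj f → e * f = f * e) ↔
      (∀ e : S, IsProj e → Bidet e) := by
  constructor
  · intro hcomm e he f hf
    set D := DRSemigroup.D (S := S)
    set R := DRSemigroup.R (S := S)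
    have hgproj : IsProj (D (e * f)) := ⟨e * f, rfl⟩
    have hhproj : IsProj (R (f * e)) := ⟨R (f * e), DRSemigroup.dr3b _⟩
    constructor
    · -- e * f = D (e*f) * e
      have hge : D (e * f) * e = D (e * f) := by
        have h := DRSemigroup.dr4b e f; rwa [proj_D he] at h
      have hef : e * f = f * e := hcomm e f he hf
      have hgf : D (e * f) * f = D (e * f) := by
        have h := DRSemigroup.dr4b f e; rwa [proj_D hf, ← hef] at h
      have hkey : e * f = D (e * f) := by
        conv_lhs => rw [← DRSemigroup.dr1 (e * f)]
        rw [← mul_assoc, hge, hgf]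
      rw [hge]; exact hkey
    · -- f * e = e * R (f*e)
      have heh : e * R (f * e) = R (f * e) := by
        have h := DRSemigroup.dr5a f e; rwa [proj_R he] at h
      have hef : e * f = f * e := hcomm e f he hf
      have hfh : f * R (f * e) = R (f * e) := by
        have h := DRSemigroup.dr5a e f; rwa [proj_R hf, hef] at h
      have hkey : f * e = R (f * e) := by
        conv_lhs => rw [← DRSemigroup.dr2 (f * e)]
        rw [mul_assoc, heh, hfh]
      rw [heh]; exact hkey
  · intro hb e f he hf
    have h1 : f * e = DRSemigroup.D (f * e) * f := (hb f hf e he).1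
    have h2 : e * f = f * DRSemigroup.R (e * f) := (hb f hf e he).2
    have hA : f * e * f = f * e := by
      rw [h1, mul_assoc, proj_idem hf]
    have hB : f * (e * f) = e * f := by
      rw [h2, ← mul_assoc, proj_idem hf]
    rw [← hA, mul_assoc, hB]
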